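/- The Chevalley–Eilenberg convolution bracket is a graded Lie bracket: let K be a field of characteristic zero, V a K-vector space and L a Lie algebra over K. For F ∈ C^{q_1} and H ∈ C^{q_2}, the map [F,H]_CE defined by [F,H]_CE(v_1,…,v_{q_1+q_2}) = Σ_{σ} sgn(σ) [F(v_{σ(1)},…,v_{σ(q_1)}), H(v_{σ(q_1+1)},…,v_{σ(q_1+q_2)})]_L, the sum over all (q_1,q_2)-shuffles σ, is again an alternating multilinear map (i.e. [F,H]_CE ∈ C^{q_1+q_2}), and this bracket satisfies graded antisymmetry [H,F]_CE = −(−1)^{q_1 q_2} [F,H]_CE and the graded Jacobi identity (−1)^{q_1 q_3}[[F,H]_CE, G]_CE + (−1)^{q_2 q_1}[[H,G]_CE, F]_CE + (−1)^{q_3 q_2}[[G,F]_CE, H]_CE = 0 for F ∈ C^{q_1}, H ∈ C^{q_2}, G ∈ C^{q_3}. -/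

import Mathlib

open scoped Classical

/-- Reindexing cast for maps on tuples. -/
def castFn {V L : Type*} {m n : ℕ} (h : m = n) (F : (Fin m → V) → L) :
    (Fin n → V) → L :=
  fun v => F fun i => v (Fin.cast h i)

/-- The Chevalley–Eilenberg convolution bracket
`[F,H](v₁,…,v_{q₁+q₂}) = Σ_σ sgn(σ) ⁅F(v_{σ(1)},…,v_{σ(q₁)}), H(v_{σ(q₁+1)},…,v_{σ(q₁+q₂)})⁆`,
the sum over all `(q₁,q₂)`-shuffles `σ`. -/
noncomputable def ceBracket {V L : Type*} [LieRing L] {q₁ q₂ : ℕ}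
    (F : (Fin q₁ → V) → L) (H : (Fin q₂ → V) → L) :
    (Fin (q₁ + q₂) → V) → L :=
  fun v => ∑ σ : Equiv.Perm (Fin (q₁ + q₂)),
    if (StrictMono fun i : Fin q₁ => σ (Fin.castAdd q₂ i)) ∧
        (StrictMono fun j : Fin q₂ => σ (Fin.natAdd q₁ j)) then
      ((Equiv.Perm.sign σ : ℤˣ) : ℤ) •
        ⁅F fun i => v (σ (Fin.castAdd q₂ i)), H fun j => v (σ (Fin.natAdd q₁ j))⁆
    else 0

namespace CEProof

open Equiv Equiv.Perm Finset

theorem zsmul_cancel {K L : Type*} [Field K] [CharZero K] [AddCommGroup L] [Module K L]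
    {m : ℤ} (hm : m ≠ 0) {x y : L} (h : m • x = m • y) : x = y := by
  have h' : ((m : K)) • x = ((m : K)) • y := by
    rw [Int.cast_smul_eq_zsmul, Int.cast_smul_eq_zsmul]; exact h
  have hmK : (m : K) ≠ 0 := Int.cast_ne_zero.mpr hm
  calc x = (m : K)⁻¹ • ((m : K) • x) := (inv_smul_smul₀ hmK x).symm
    _ = (m : K)⁻¹ • ((m : K) • y) := by rw [h']
    _ = y := inv_smul_smul₀ hmK y

open Fin.NatCast in
theorem finRotate_pow_apply {n : ℕ} (s : ℕ) (x : Fin (n + 1)) :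
    ((finRotate (n + 1)) ^ s) x = x + (s : Fin (n + 1)) := by
  induction s with
  | zero => simp
  | succ s ih =>
    rw [pow_succ', Perm.mul_apply, finRotate_succ_apply, ih]
    push_cast
    rw [add_assoc]

open Fin.NatCast in
theorem rot_val {N : ℕ} (s : ℕ) (x : Fin N) :
    (((finRotate N) ^ s) x).val = (x.val + s) % N := by
  cases N with
  | zero => exact x.elim0
  | succ n =>
    rw [finRotate_pow_apply, Fin.val_add, Fin.val_natCast]
    conv_rhs => rw [Nat.add_mod]
    rw [Nat.mod_add_mod]

theorem sign_rot {N : ℕ} (s : ℕ) (hs : s ≤ N) :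
    ((Perm.sign ((finRotate N) ^ s) : ℤˣ) : ℤ) = (-1) ^ (s * (N - s)) := by
  cases N with
  | zero =>
    obtain rfl : s = 0 := Nat.le_zero.mp hs
    simp [show (finRotate 0 : Perm (Fin 0)) = 1 from Subsingleton.elim _ _]
  | succ n =>
    rw [map_pow, sign_finRotate, ← pow_mul, Units.val_pow_eq_pow_val]
    have hval : ((-1 : ℤˣ) : ℤ) = -1 := rfl
    rw [hval, Nat.add_sub_cancel]
    rcases Nat.even_or_odd s with hs2 | hs2
    · rw [Even.neg_one_pow (hs2.mul_left n), Even.neg_one_pow (hs2.mul_right _)]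
    · rcases Nat.even_or_odd n with hn | hn
      · have h1 : Even (n * s) := hn.mul_right s
        have h2 : Even (s * (n + 1 - s)) := by
          have : Even (n + 1 - s) := Nat.Odd.sub_odd hn.add_one hs2
          exact this.mul_left s
        rw [h1.neg_one_pow, h2.neg_one_pow]
      · have h1 : Odd (n * s) := hn.mul hs2
        have h2 : Odd (s * (n + 1 - s)) := by
          refine hs2.mul ?_
          exact Nat.Even.sub_odd hs (by simpa using hn.add_one) hs2
        rw [h1.neg_one_pow, h2.neg_one_pow]

def blockPerm {a b : ℕ} (p : Perm (Fin a)) (q : Perm (Fin b)) : Perm (Fin (a + b)) :=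
  finSumFinEquiv.permCongr (p.sumCongr q)

@[simp] theorem blockPerm_castAdd {a b : ℕ} (p : Perm (Fin a)) (q : Perm (Fin b)) (i : Fin a) :
    blockPerm p q (Fin.castAdd b i) = Fin.castAdd b (p i) := by
  simp [blockPerm, Equiv.permCongr_apply, finSumFinEquiv_symm_apply_castAdd]

@[simp] theorem blockPerm_natAdd {a b : ℕ} (p : Perm (Fin a)) (q : Perm (Fin b)) (j : Fin b) :
    blockPerm p q (Fin.natAdd a j) = Fin.natAdd a (q j) := by
  simp [blockPerm, Equiv.permCongr_apply, finSumFinEquiv_symm_apply_natAdd]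

theorem sign_blockPerm {a b : ℕ} (p : Perm (Fin a)) (q : Perm (Fin b)) :
    Perm.sign (blockPerm p q) = Perm.sign p * Perm.sign q := by
  rw [blockPerm, sign_permCongr, sign_sumCongr]

abbrev IsShuffle {a b : ℕ} (σ : Perm (Fin (a + b))) : Prop :=
  (StrictMono fun i : Fin a => σ (Fin.castAdd b i)) ∧
    (StrictMono fun j : Fin b => σ (Fin.natAdd a j))

def shAssemble {a b : ℕ}
    (x : (Perm (Fin a) × Perm (Fin b)) × {σ : Perm (Fin (a + b)) // IsShuffle σ}) :
    Perm (Fin (a + b)) :=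
  x.2.1 * blockPerm x.1.1 x.1.2

theorem castAdd_inj {a b : ℕ} {i j : Fin a} (h : Fin.castAdd b i = Fin.castAdd b j) : i = j := by
  have := congr_arg Fin.val h
  simpa [Fin.ext_iff] using this

theorem natAdd_inj {a b : ℕ} {i j : Fin b} (h : Fin.natAdd a i = Fin.natAdd a j) : i = j := by
  have := congr_arg Fin.val h
  simp only [Fin.coe_natAdd] at this
  exact Fin.ext (by omega)

theorem shAssemble_bij {a b : ℕ} :
    Function.Bijective (shAssemble (a := a) (b := b)) := by
  constructor
  · rintro ⟨⟨p, q⟩, ⟨τ, hτ1, hτ2⟩⟩ ⟨⟨p', q'⟩, ⟨τ', hτ1', hτ2'⟩⟩ h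
    simp only [shAssemble] at h
    have happ : ∀ k, τ (blockPerm p q k) = τ' (blockPerm p' q' k) := fun k => by
      rw [← Perm.mul_apply, ← Perm.mul_apply, h]
    have hc : ∀ i : Fin a, τ (Fin.castAdd b (p i)) = τ' (Fin.castAdd b (p' i)) := by
      intro i; simpa using happ (Fin.castAdd b i)
    have hn : ∀ j : Fin b, τ (Fin.natAdd a (q j)) = τ' (Fin.natAdd a (q' j)) := by
      intro j; simpa using happ (Fin.natAdd a j)
    have hcomp1 : (fun i : Fin a => τ (Fin.castAdd b i)) ∘ ⇑p
        = (fun i : Fin a => τ' (Fin.castAdd b i)) ∘ ⇑p' := funext hc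
    have hcomp2 : (fun j : Fin b => τ (Fin.natAdd a j)) ∘ ⇑q
        = (fun j : Fin b => τ' (Fin.natAdd a j)) ∘ ⇑q' := funext hn
    have hr1 : Set.range (fun i : Fin a => τ (Fin.castAdd b i))
        = Set.range (fun i : Fin a => τ' (Fin.castAdd b i)) := by
      have e1 := p.surjective.range_comp (g := fun i : Fin a => τ (Fin.castAdd b i))
      have e2 := p'.surjective.range_comp (g := fun i : Fin a => τ' (Fin.castAdd b i))
      rw [← e1, hcomp1, e2]
    have hr2 : Set.range (fun j : Fin b => τ (Fin.natAdd a j))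
        = Set.range (fun j : Fin b => τ' (Fin.natAdd a j)) := by
      have e1 := q.surjective.range_comp (g := fun j : Fin b => τ (Fin.natAdd a j))
      have e2 := q'.surjective.range_comp (g := fun j : Fin b => τ' (Fin.natAdd a j))
      rw [← e1, hcomp2, e2]
    have instA : WellFoundedLT (Fin a) := inferInstance
    have instB : WellFoundedLT (Fin b) := inferInstance
    have hf1 : (fun i : Fin a => τ (Fin.castAdd b i)) = fun i => τ' (Fin.castAdd b i) :=
      (@StrictMono.range_inj (Fin a) (Fin (a + b)) _ _ instA _ _ hτ1 hτ1').mp hr1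
    have hf2 : (fun j : Fin b => τ (Fin.natAdd a j)) = fun j => τ' (Fin.natAdd a j) :=
      (@StrictMono.range_inj (Fin b) (Fin (a + b)) _ _ instB _ _ hτ2 hτ2').mp hr2
    have hττ' : τ = τ' := Equiv.ext fun k =>
      Fin.addCases (motive := fun k => τ k = τ' k)
        (fun i => congr_fun hf1 i) (fun j => congr_fun hf2 j) k
    have hp : p = p' := by
      ext i
      have h1 := hc i
      rw [hττ'] at h1
      have := castAdd_inj (τ'.injective h1)
      exact congr_arg Fin.val this
    have hq : q = q' := by
      ext j
      have h1 := hn j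
      rw [hττ'] at h1
      have := natAdd_inj (τ'.injective h1)
      exact congr_arg Fin.val this
    subst hττ' hp hq
    rfl
  · intro σ
    have hinj1 : Function.Injective fun i : Fin a => σ (Fin.castAdd b i) := by
      intro i j h
      exact castAdd_inj (σ.injective h)
    have hinj2 : Function.Injective fun j : Fin b => σ (Fin.natAdd a j) := by
      intro i j h
      exact natAdd_inj (σ.injective h)
    have hdisj : ∀ (i : Fin a) (j : Fin b), σ (Fin.castAdd b i) ≠ σ (Fin.natAdd a j) := by
      intro i j h
      have := congr_arg Fin.val (σ.injective h)
      simp only [Fin.coe_castAdd, Fin.coe_natAdd] at this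
      omega
    set s : Finset (Fin (a + b)) := image (fun i : Fin a => σ (Fin.castAdd b i)) univ with hs_def
    set t : Finset (Fin (a + b)) := image (fun j : Fin b => σ (Fin.natAdd a j)) univ with ht_def
    have hs : s.card = a := by
      rw [hs_def, card_image_of_injective _ hinj1, card_univ, Fintype.card_fin]
    have ht : t.card = b := by
      rw [ht_def, card_image_of_injective _ hinj2, card_univ, Fintype.card_fin]
    have hmem_s : ∀ i : Fin a, σ (Fin.castAdd b i) ∈ s := fun i =>
      mem_image.mpr ⟨i, mem_univ i, rfl⟩
    have hmem_t : ∀ j : Fin b, σ (Fin.natAdd a j) ∈ t := fun j =>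
      mem_image.mpr ⟨j, mem_univ j, rfl⟩
    have hst : ∀ x : Fin (a + b), x ∈ s → x ∈ t → False := by
      intro x hxs hxt
      obtain ⟨i, _, rfl⟩ := mem_image.mp hxs
      obtain ⟨j, _, hj⟩ := mem_image.mp hxt
      exact hdisj i j hj.symm
    set f₁ := s.orderEmbOfFin hs with hf₁
    set f₂ := t.orderEmbOfFin ht with hf₂
    set τfun : Fin (a + b) → Fin (a + b) :=
      fun k => Sum.elim ⇑f₁ ⇑f₂ (finSumFinEquiv.symm k) with hτfun
    have τinj : Function.Injective τfun := by
      intro k k' h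
      rcases hx : finSumFinEquiv.symm k with i | j <;>
        rcases hy : finSumFinEquiv.symm k' with i' | j' <;>
        rw [hτfun] at h <;> simp only [hx, hy, Sum.elim_inl, Sum.elim_inr] at h
      · have : i = i' := f₁.injective h
        subst this
        exact finSumFinEquiv.symm.injective (hx.trans hy.symm)
      · exfalso
        have h1 : (f₁ i : Fin (a + b)) ∈ s := Finset.orderEmbOfFin_mem s hs i
        have h2 : (f₂ j' : Fin (a + b)) ∈ t := Finset.orderEmbOfFin_mem t ht j'
        rw [h] at h1
        exact hst _ h1 h2
      · exfalso
        have h1 : (f₁ i' : Fin (a + b)) ∈ s := Finset.orderEmbOfFin_mem s hs i'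
        have h2 : (f₂ j : Fin (a + b)) ∈ t := Finset.orderEmbOfFin_mem t ht j
        rw [← h] at h1
        exact hst _ h1 h2
      · have : j = j' := f₂.injective h
        subst this
        exact finSumFinEquiv.symm.injective (hx.trans hy.symm)
    set τ : Perm (Fin (a + b)) :=
      Equiv.ofBijective τfun (Finite.injective_iff_bijective.mp τinj) with hτdef
    have hτc : ∀ i : Fin a, τ (Fin.castAdd b i) = f₁ i := by
      intro i
      show τfun (Fin.castAdd b i) = f₁ i
      rw [hτfun]
      simp [finSumFinEquiv_symm_apply_castAdd]
    have hτn : ∀ j : Fin b, τ (Fin.natAdd a j) = f₂ j := by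
      intro j
      show τfun (Fin.natAdd a j) = f₂ j
      rw [hτfun]
      simp [finSumFinEquiv_symm_apply_natAdd]
    have hShuffle : IsShuffle τ := by
      constructor
      · have : (fun i : Fin a => τ (Fin.castAdd b i)) = ⇑f₁ := funext hτc
        rw [this]; exact f₁.strictMono
      · have : (fun j : Fin b => τ (Fin.natAdd a j)) = ⇑f₂ := funext hτn
        rw [this]; exact f₂.strictMono
    set pfun : Fin a → Fin a :=
      fun i => (s.orderIsoOfFin hs).symm ⟨σ (Fin.castAdd b i), hmem_s i⟩ with hpfun
    have pkey : ∀ i, f₁ (pfun i) = σ (Fin.castAdd b i) := by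
      intro i
      rw [hpfun, hf₁]
      rw [← Finset.coe_orderIsoOfFin_apply]
      rw [OrderIso.apply_symm_apply]
    have pinj : Function.Injective pfun := by
      intro i j h
      apply hinj1
      show σ (Fin.castAdd b i) = σ (Fin.castAdd b j)
      rw [← pkey i, ← pkey j, h]
    set qfun : Fin b → Fin b :=
      fun j => (t.orderIsoOfFin ht).symm ⟨σ (Fin.natAdd a j), hmem_t j⟩ with hqfun
    have qkey : ∀ j, f₂ (qfun j) = σ (Fin.natAdd a j) := by
      intro j
      rw [hqfun, hf₂]
      rw [← Finset.coe_orderIsoOfFin_apply]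
      rw [OrderIso.apply_symm_apply]
    have qinj : Function.Injective qfun := by
      intro i j h
      apply hinj2
      show σ (Fin.natAdd a i) = σ (Fin.natAdd a j)
      rw [← qkey i, ← qkey j, h]
    set pP : Perm (Fin a) := Equiv.ofBijective pfun (Finite.injective_iff_bijective.mp pinj) with hpP
    set qP : Perm (Fin b) := Equiv.ofBijective qfun (Finite.injective_iff_bijective.mp qinj) with hqP
    refine ⟨⟨⟨pP, qP⟩, ⟨τ, hShuffle⟩⟩, Equiv.ext fun k => ?_⟩
    show (τ * blockPerm pP qP) k = σ k
    refine Fin.addCases (motive := fun k => (τ * blockPerm pP qP) k = σ k) ?_ ?_ k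
    · intro i
      rw [Perm.mul_apply, blockPerm_castAdd]
      show τ (Fin.castAdd b (pfun i)) = _
      rw [hτc, pkey]
    · intro j
      rw [Perm.mul_apply, blockPerm_natAdd]
      show τ (Fin.natAdd a (qfun j)) = _
      rw [hτn, qkey]


/-! ### the full (unnormalized) sum -/

noncomputable def fullSum {V L : Type*} [LieRing L] {a b : ℕ}
    (F : (Fin a → V) → L) (H : (Fin b → V) → L) : (Fin (a + b) → V) → L :=
  fun v => ∑ σ : Perm (Fin (a + b)), ((Perm.sign σ : ℤˣ) : ℤ) •
    ⁅F fun i => v (σ (Fin.castAdd b i)), H fun j => v (σ (Fin.natAdd a j))⁆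

section Main

variable {K V L : Type*} [Field K] [CharZero K] [AddCommGroup V] [Module K V]
  [LieRing L] [LieAlgebra K L]

theorem fullSum_eq {a b : ℕ}
    (F : AlternatingMap K V L (Fin a)) (H : AlternatingMap K V L (Fin b)) (v : Fin (a + b) → V) :
    fullSum ⇑F ⇑H v = ((a.factorial * b.factorial : ℕ) : ℤ) • ceBracket ⇑F ⇑H v := by
  have key : ∀ (p : Perm (Fin a)) (q : Perm (Fin b)) (τ : Perm (Fin (a + b))),
      ((Perm.sign (τ * blockPerm p q) : ℤˣ) : ℤ) •
        ⁅F fun i => v ((τ * blockPerm p q) (Fin.castAdd b i)),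
          H fun j => v ((τ * blockPerm p q) (Fin.natAdd a j))⁆
      = ((Perm.sign τ : ℤˣ) : ℤ) •
        ⁅F fun i => v (τ (Fin.castAdd b i)), H fun j => v (τ (Fin.natAdd a j))⁆ := by
    intro p q τ
    have hargF : (fun i => v ((τ * blockPerm p q) (Fin.castAdd b i)))
        = fun i => v (τ (Fin.castAdd b (p i))) := by
      funext i; rw [Perm.mul_apply, blockPerm_castAdd]
    have hargH : (fun j => v ((τ * blockPerm p q) (Fin.natAdd a j)))
        = fun j => v (τ (Fin.natAdd a (q j))) := by
      funext j; rw [Perm.mul_apply, blockPerm_natAdd]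
    rw [hargF, hargH]
    have hF : (F fun i => v (τ (Fin.castAdd b (p i))))
        = ((Perm.sign p : ℤˣ) : ℤ) • F fun i => v (τ (Fin.castAdd b i)) := by
      have := F.map_perm (fun i => v (τ (Fin.castAdd b i))) p
      simpa [Function.comp_def, Units.smul_def] using this
    have hH : (H fun j => v (τ (Fin.natAdd a (q j))))
        = ((Perm.sign q : ℤˣ) : ℤ) • H fun j => v (τ (Fin.natAdd a j)) := by
      have := H.map_perm (fun j => v (τ (Fin.natAdd a j))) q
      simpa [Function.comp_def, Units.smul_def] using this
    rw [hF, hH, map_mul, sign_blockPerm, zsmul_lie, lie_zsmul, smul_smul, smul_smul]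
    congr 1
    have hp2 : ((Perm.sign p : ℤˣ) : ℤ) * ((Perm.sign p : ℤˣ) : ℤ) = 1 := by
      rw [← Units.val_mul, Int.units_mul_self, Units.val_one]
    have hq2 : ((Perm.sign q : ℤˣ) : ℤ) * ((Perm.sign q : ℤˣ) : ℤ) = 1 := by
      rw [← Units.val_mul, Int.units_mul_self, Units.val_one]
    rw [Units.val_mul, Units.val_mul]
    linear_combination (((Perm.sign τ : ℤˣ) : ℤ) * ((Perm.sign p : ℤˣ) : ℤ)
      * ((Perm.sign p : ℤˣ) : ℤ)) * hq2 + ((Perm.sign τ : ℤˣ) : ℤ) * hp2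
  calc fullSum ⇑F ⇑H v
      = ∑ x : (Perm (Fin a) × Perm (Fin b)) × {σ : Perm (Fin (a + b)) // IsShuffle σ},
          ((Perm.sign (shAssemble x) : ℤˣ) : ℤ) •
            ⁅F fun i => v ((shAssemble x) (Fin.castAdd b i)),
              H fun j => v ((shAssemble x) (Fin.natAdd a j))⁆ :=
        (Function.Bijective.sum_comp shAssemble_bij _).symm
    _ = ∑ _pq : Perm (Fin a) × Perm (Fin b), ∑ τ : {σ : Perm (Fin (a + b)) // IsShuffle σ},
          ((Perm.sign τ.1 : ℤˣ) : ℤ) •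
            ⁅F fun i => v (τ.1 (Fin.castAdd b i)), H fun j => v (τ.1 (Fin.natAdd a j))⁆ := by
        rw [Fintype.sum_prod_type]
        exact Finset.sum_congr rfl fun pq _ => Finset.sum_congr rfl fun τ _ => key pq.1 pq.2 τ.1
    _ = ((a.factorial * b.factorial : ℕ) : ℤ) • ceBracket ⇑F ⇑H v := by
        rw [Finset.sum_const, card_univ, Fintype.card_prod, Fintype.card_perm,
          Fintype.card_perm, Fintype.card_fin, Fintype.card_fin, ← natCast_zsmul]
        congr 1
        have h1 : ceBracket (⇑F) (⇑H) v = ∑ σ : Perm (Fin (a + b)),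
            if IsShuffle σ then ((Perm.sign σ : ℤˣ) : ℤ) •
              ⁅F fun i => v (σ (Fin.castAdd b i)), H fun j => v (σ (Fin.natAdd a j))⁆
            else 0 := by
          simp only [ceBracket]
        rw [h1, ← Finset.sum_filter]
        exact (Finset.sum_subtype (p := fun σ : Perm (Fin (a + b)) => IsShuffle σ)
          (filter (fun σ : Perm (Fin (a + b)) => IsShuffle σ) univ) (fun x => by simp)
          (fun σ => ((Perm.sign σ : ℤˣ) : ℤ) •
            ⁅F fun i => v (σ (Fin.castAdd b i)), H fun j => v (σ (Fin.natAdd a j))⁆)).symm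

/-! ### multilinearity: part 1 -/

def lieBilin (K L : Type*) [CommRing K] [LieRing L] [LieAlgebra K L] : L →ₗ[K] L →ₗ[K] L :=
  LinearMap.mk₂ K (fun x y => ⁅x, y⁆) add_lie smul_lie lie_add lie_smul

noncomputable def ceMul {a b : ℕ}
    (F : AlternatingMap K V L (Fin a)) (H : AlternatingMap K V L (Fin b)) :
    MultilinearMap K (fun _ : Fin (a + b) => V) L :=
  ((TensorProduct.lift (lieBilin K L)).compMultilinearMap
      (MultilinearMap.domCoprod F.toMultilinearMap H.toMultilinearMap)).domDomCongr
    finSumFinEquiv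

theorem ceMul_apply {a b : ℕ}
    (F : AlternatingMap K V L (Fin a)) (H : AlternatingMap K V L (Fin b)) (v : Fin (a + b) → V) :
    ceMul F H v = ⁅F fun i => v (Fin.castAdd b i), H fun j => v (Fin.natAdd a j)⁆ := by
  simp [ceMul, MultilinearMap.domDomCongr_apply, LinearMap.compMultilinearMap_apply,
    MultilinearMap.domCoprod_apply, TensorProduct.lift.tmul, lieBilin,
    finSumFinEquiv_apply_left, finSumFinEquiv_apply_right, LinearMap.mk₂_apply]

theorem alternatization_ceMul_apply {a b : ℕ}
    (F : AlternatingMap K V L (Fin a)) (H : AlternatingMap K V L (Fin b)) (v : Fin (a + b) → V) :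
    MultilinearMap.alternatization (ceMul F H) v = fullSum ⇑F ⇑H v := by
  rw [MultilinearMap.alternatization_apply]
  refine Finset.sum_congr rfl fun σ _ => ?_
  rw [MultilinearMap.domDomCongr_apply, ceMul_apply, Units.smul_def]

theorem exists_alt {a b : ℕ}
    (F : AlternatingMap K V L (Fin a)) (H : AlternatingMap K V L (Fin b)) :
    ∃ B : AlternatingMap K V L (Fin (a + b)), ⇑B = ceBracket ⇑F ⇑H := by
  refine ⟨(((a.factorial * b.factorial : ℕ) : K)⁻¹) •
    MultilinearMap.alternatization (ceMul F H), ?_⟩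
  funext v
  have h1 : MultilinearMap.alternatization (ceMul F H) v
      = ((a.factorial * b.factorial : ℕ) : ℤ) • ceBracket ⇑F ⇑H v := by
    rw [alternatization_ceMul_apply, fullSum_eq]
  have hne : ((a.factorial * b.factorial : ℕ) : K) ≠ 0 := by
    exact_mod_cast Nat.cast_ne_zero.mpr
      (Nat.mul_ne_zero a.factorial_ne_zero b.factorial_ne_zero)
  rw [AlternatingMap.smul_apply, h1, ← Int.cast_smul_eq_zsmul K, smul_smul]
  rw [show (((a.factorial * b.factorial : ℕ) : ℤ) : K) = ((a.factorial * b.factorial : ℕ) : K) by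
    push_cast; ring]
  rw [inv_mul_cancel₀ hne, one_smul]

/-! ### part 2: graded antisymmetry at the level of full sums -/

theorem fullSum_swap {V L : Type*} [LieRing L] {a b : ℕ}
    (F : (Fin a → V) → L) (H : (Fin b → V) → L) (v : Fin (a + b) → V) :
    fullSum H F (fun i => v (Fin.cast (Nat.add_comm b a) i))
      = -(((-1 : ℤ) ^ (a * b)) • fullSum F H v) := by
  set w : Fin (b + a) → V := fun i => v (Fin.cast (Nat.add_comm b a) i) with hw
  set g : Perm (Fin (b + a)) → L := fun σ' => ((Perm.sign σ' : ℤˣ) : ℤ) •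
    ⁅H fun j => w (σ' (Fin.castAdd a j)), F fun i => w (σ' (Fin.natAdd b i))⁆ with hg
  set c : Fin (a + b) ≃ Fin (b + a) := finCongr (Nat.add_comm a b) with hc
  set P : Perm (Fin (b + a)) := (finRotate (b + a)) ^ a with hP
  have hPval : ∀ x : Fin (b + a), (P x).val = (x.val + a) % (b + a) := fun x => rot_val a x
  have hsP : ((Perm.sign P : ℤˣ) : ℤ) = (-1 : ℤ) ^ (a * b) := by
    rw [hP, sign_rot a (Nat.le_add_left a b)]
    have e : b + a - a = b := by omega
    rw [e]
  have e1 : ∑ σ' : Perm (Fin (b + a)), g (σ' * P) = ∑ σ' : Perm (Fin (b + a)), g σ' := by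
    have h := Equiv.sum_comp (Equiv.mulRight P) g
    simpa [Equiv.coe_mulRight] using h
  have e2 : ∑ σ : Perm (Fin (a + b)), g (c.permCongr σ * P)
      = ∑ σ' : Perm (Fin (b + a)), g (σ' * P) :=
    Equiv.sum_comp c.permCongr (fun σ' => g (σ' * P))
  have step : fullSum H F w = ∑ σ : Perm (Fin (a + b)), g (c.permCongr σ * P) := by
    rw [show fullSum H F w = ∑ σ' : Perm (Fin (b + a)), g σ' from rfl, ← e1, ← e2]
  have term : ∀ σ : Perm (Fin (a + b)), g (c.permCongr σ * P)
      = -(((-1 : ℤ) ^ (a * b)) • (((Perm.sign σ : ℤˣ) : ℤ) •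
        ⁅F fun i => v (σ (Fin.castAdd b i)), H fun j => v (σ (Fin.natAdd a j))⁆)) := by
    intro σ
    have hargH : ∀ j : Fin b,
        w ((c.permCongr σ * P) (Fin.castAdd a j)) = v (σ (Fin.natAdd a j)) := by
      intro j
      have h1 : c.symm (P (Fin.castAdd a j)) = Fin.natAdd a j := by
        apply Fin.ext
        have h2 := hPval (Fin.castAdd a j)
        simp only [hc, finCongr_symm, finCongr_apply, Fin.coe_cast, Fin.coe_castAdd,
          Fin.coe_natAdd] at h2 ⊢
        rw [h2, Nat.mod_eq_of_lt (by omega)]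
        omega
      show w (c (σ (c.symm (P (Fin.castAdd a j))))) = _
      rw [h1, hw]
      apply congr_arg
      apply Fin.ext
      simp [hc]
    have hargF : ∀ i : Fin a,
        w ((c.permCongr σ * P) (Fin.natAdd b i)) = v (σ (Fin.castAdd b i)) := by
      intro i
      have h1 : c.symm (P (Fin.natAdd b i)) = Fin.castAdd b i := by
        apply Fin.ext
        have h2 := hPval (Fin.natAdd b i)
        simp only [hc, finCongr_symm, finCongr_apply, Fin.coe_cast, Fin.coe_castAdd,
          Fin.coe_natAdd] at h2 ⊢
        rw [h2]
        have e2 : b + (i : ℕ) + a = (b + a) + (i : ℕ) := by omega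
        rw [e2, Nat.add_mod_left, Nat.mod_eq_of_lt (by omega)]
      show w (c (σ (c.symm (P (Fin.natAdd b i))))) = _
      rw [h1, hw]
      apply congr_arg
      apply Fin.ext
      simp [hc]
    have eH : (fun j => w ((c.permCongr σ * P) (Fin.castAdd a j)))
        = fun j => v (σ (Fin.natAdd a j)) := funext hargH
    have eF : (fun i => w ((c.permCongr σ * P) (Fin.natAdd b i)))
        = fun i => v (σ (Fin.castAdd b i)) := funext hargF
    rw [hg]
    simp only []
    rw [eH, eF, map_mul, sign_permCongr, Units.val_mul, hsP]
    rw [show ⁅H fun j => v (σ (Fin.natAdd a j)), F fun i => v (σ (Fin.castAdd b i))⁆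
        = -⁅F fun i => v (σ (Fin.castAdd b i)), H fun j => v (σ (Fin.natAdd a j))⁆ by
      rw [← lie_skew (F fun i => v (σ (Fin.castAdd b i))) (H fun j => v (σ (Fin.natAdd a j))),
        neg_neg]]
    rw [smul_neg]
    congr 1
    rw [smul_smul, mul_comm]
  rw [step]
  calc ∑ σ : Perm (Fin (a + b)), g (c.permCongr σ * P)
      = ∑ σ : Perm (Fin (a + b)), -(((-1 : ℤ) ^ (a * b)) • (((Perm.sign σ : ℤˣ) : ℤ) •
          ⁅F fun i => v (σ (Fin.castAdd b i)), H fun j => v (σ (Fin.natAdd a j))⁆)) :=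
        Finset.sum_congr rfl fun σ _ => term σ
    _ = -(((-1 : ℤ) ^ (a * b)) • fullSum F H v) := by
        rw [Finset.sum_neg_distrib, ← Finset.smul_sum]
        rfl

end Main

/-! ### part 3: triple sums -/

theorem sum_lie' {L : Type*} [LieRing L] {ι : Type*} (s : Finset ι) (f : ι → L) (y : L) :
    ⁅∑ i ∈ s, f i, y⁆ = ∑ i ∈ s, ⁅f i, y⁆ :=
  map_sum (AddMonoidHom.mk' (fun x => ⁅x, y⁆) (fun x₁ x₂ => add_lie x₁ x₂ y)) f s

theorem jac3 {L : Type*} [LieRing L] (x y z : L) :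
    ⁅⁅x, y⁆, z⁆ + ⁅⁅y, z⁆, x⁆ + ⁅⁅z, x⁆, y⁆ = 0 := by
  have h := lie_jacobi x y z
  rw [(lie_skew ⁅x, y⁆ z).symm, (lie_skew ⁅y, z⁆ x).symm, (lie_skew ⁅z, x⁆ y).symm]
  rw [show -⁅z, ⁅x, y⁆⁆ + -⁅x, ⁅y, z⁆⁆ + -⁅y, ⁅z, x⁆⁆
      = -(⁅x, ⁅y, z⁆⁆ + ⁅y, ⁅z, x⁆⁆ + ⁅z, ⁅x, y⁆⁆) by abel]
  rw [h, neg_zero]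

noncomputable def tripleSum {V L : Type*} [LieRing L] {a b c : ℕ}
    (F : (Fin a → V) → L) (H : (Fin b → V) → L) (G : (Fin c → V) → L) :
    (Fin (a + b + c) → V) → L := fun v =>
  ∑ σ : Perm (Fin (a + b + c)), ((Perm.sign σ : ℤˣ) : ℤ) •
    ⁅⁅F fun i => v (σ (Fin.castAdd c (Fin.castAdd b i))),
       H fun j => v (σ (Fin.castAdd c (Fin.natAdd a j)))⁆,
      G fun k => v (σ (Fin.natAdd (a + b) k))⁆

section Main2

variable {K V L : Type*} [Field K] [CharZero K] [AddCommGroup V] [Module K V]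
  [LieRing L] [LieAlgebra K L]

theorem triple_expand {a b c : ℕ}
    (F : AlternatingMap K V L (Fin a)) (H : AlternatingMap K V L (Fin b))
    (G : (Fin c → V) → L) (v : Fin (a + b + c) → V) :
    ((a.factorial * b.factorial : ℕ) : ℤ) • fullSum (ceBracket ⇑F ⇑H) G v
      = (((a + b).factorial : ℕ) : ℤ) • tripleSum ⇑F ⇑H G v := by
  set gT : Perm (Fin (a + b + c)) → L := fun ρ => ((Perm.sign ρ : ℤˣ) : ℤ) •
    ⁅⁅F fun i => v (ρ (Fin.castAdd c (Fin.castAdd b i))),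
       H fun j => v (ρ (Fin.castAdd c (Fin.natAdd a j)))⁆,
      G fun k => v (ρ (Fin.natAdd (a + b) k))⁆ with hgT
  have step1 : ((a.factorial * b.factorial : ℕ) : ℤ) • fullSum (ceBracket ⇑F ⇑H) G v
      = ∑ σ : Perm (Fin (a + b + c)), ∑ τ : Perm (Fin (a + b)),
          gT (σ * blockPerm τ (1 : Perm (Fin c))) := by
    rw [show fullSum (ceBracket ⇑F ⇑H) G v = ∑ σ : Perm (Fin (a + b + c)),
        ((Perm.sign σ : ℤˣ) : ℤ) •
          ⁅ceBracket ⇑F ⇑H fun x => v (σ (Fin.castAdd c x)),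
            G fun k => v (σ (Fin.natAdd (a + b) k))⁆ from rfl]
    rw [Finset.smul_sum]
    refine Finset.sum_congr rfl fun σ _ => ?_
    rw [smul_comm, ← zsmul_lie]
    rw [show ((a.factorial * b.factorial : ℕ) : ℤ) •
        ceBracket ⇑F ⇑H (fun x => v (σ (Fin.castAdd c x)))
        = fullSum ⇑F ⇑H (fun x => v (σ (Fin.castAdd c x))) from
      (fullSum_eq F H _).symm]
    rw [show fullSum ⇑F ⇑H (fun x => v (σ (Fin.castAdd c x)))
        = ∑ τ : Perm (Fin (a + b)), ((Perm.sign τ : ℤˣ) : ℤ) •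
          ⁅F fun i => v (σ (Fin.castAdd c (τ (Fin.castAdd b i)))),
            H fun j => v (σ (Fin.castAdd c (τ (Fin.natAdd a j))))⁆ from rfl]
    rw [sum_lie', Finset.smul_sum]
    refine Finset.sum_congr rfl fun τ _ => ?_
    rw [zsmul_lie, smul_smul, hgT]
    simp only []
    have h1 : (fun i => v ((σ * blockPerm τ (1 : Perm (Fin c)))
        (Fin.castAdd c (Fin.castAdd b i))))
        = fun i => v (σ (Fin.castAdd c (τ (Fin.castAdd b i)))) := by
      funext i; rw [Perm.mul_apply, blockPerm_castAdd]
    have h2 : (fun j => v ((σ * blockPerm τ (1 : Perm (Fin c)))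
        (Fin.castAdd c (Fin.natAdd a j))))
        = fun j => v (σ (Fin.castAdd c (τ (Fin.natAdd a j)))) := by
      funext j; rw [Perm.mul_apply, blockPerm_castAdd]
    have h3 : (fun k => v ((σ * blockPerm τ (1 : Perm (Fin c)))
        (Fin.natAdd (a + b) k)))
        = fun k => v (σ (Fin.natAdd (a + b) k)) := by
      funext k; rw [Perm.mul_apply, blockPerm_natAdd, Perm.one_apply]
    rw [h1, h2, h3, map_mul, sign_blockPerm, map_one, mul_one, Units.val_mul]
  rw [step1, Finset.sum_comm]
  have step2 : ∀ τ : Perm (Fin (a + b)),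
      ∑ σ : Perm (Fin (a + b + c)), gT (σ * blockPerm τ (1 : Perm (Fin c)))
      = ∑ σ : Perm (Fin (a + b + c)), gT σ := by
    intro τ
    have h := Equiv.sum_comp (Equiv.mulRight (blockPerm τ (1 : Perm (Fin c)))) gT
    simpa [Equiv.coe_mulRight] using h
  rw [Finset.sum_congr rfl fun τ _ => step2 τ, Finset.sum_const, card_univ,
    Fintype.card_perm, Fintype.card_fin, ← natCast_zsmul]
  rfl

theorem triple_eq {a b c : ℕ}
    (F : AlternatingMap K V L (Fin a)) (H : AlternatingMap K V L (Fin b))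
    (G : AlternatingMap K V L (Fin c)) (v : Fin (a + b + c) → V) :
    tripleSum ⇑F ⇑H ⇑G v
      = ((a.factorial * b.factorial * c.factorial : ℕ) : ℤ) •
        ceBracket (ceBracket ⇑F ⇑H) ⇑G v := by
  obtain ⟨B, hB⟩ := exists_alt F H
  apply zsmul_cancel (K := K) (m := (((a + b).factorial : ℕ) : ℤ))
    (by exact_mod_cast (a + b).factorial_ne_zero)
  rw [← triple_expand F H ⇑G v, ← hB, fullSum_eq B G v, hB]
  rw [smul_smul, smul_smul]
  congr 1
  push_cast
  ring

end Main2

theorem triple_cyclic {V L : Type*} [LieRing L] {a b c : ℕ}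
    (F : (Fin a → V) → L) (H : (Fin b → V) → L) (G : (Fin c → V) → L)
    (v : Fin (a + b + c) → V) (h₂ : b + c + a = a + b + c) (h₃ : c + a + b = a + b + c) :
    ((-1 : ℤ) ^ (a * c)) • tripleSum F H G v
      + ((-1 : ℤ) ^ (b * a)) • tripleSum H G F (fun x => v (Fin.cast h₂ x))
      + ((-1 : ℤ) ^ (c * b)) • tripleSum G F H (fun x => v (Fin.cast h₃ x)) = 0 := by
  have T2 : tripleSum H G F (fun x => v (Fin.cast h₂ x))
      = ∑ σ : Perm (Fin (a + b + c)), ((Perm.sign σ : ℤˣ) : ℤ) •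
          (((-1 : ℤ) ^ (a * (b + c))) •
            ⁅⁅H fun j => v (σ (Fin.castAdd c (Fin.natAdd a j))),
               G fun k => v (σ (Fin.natAdd (a + b) k))⁆,
              F fun i => v (σ (Fin.castAdd c (Fin.castAdd b i)))⁆) := by
    set w2 : Fin (b + c + a) → V := fun x => v (Fin.cast h₂ x) with hw2
    set g2 : Perm (Fin (b + c + a)) → L := fun σ' => ((Perm.sign σ' : ℤˣ) : ℤ) •
      ⁅⁅H fun j => w2 (σ' (Fin.castAdd a (Fin.castAdd c j))),
         G fun k => w2 (σ' (Fin.castAdd a (Fin.natAdd b k)))⁆,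
        F fun i => w2 (σ' (Fin.natAdd (b + c) i))⁆ with hg2
    set c2 : Fin (a + b + c) ≃ Fin (b + c + a) := finCongr h₂.symm with hc2'
    set P2 : Perm (Fin (b + c + a)) := (finRotate (b + c + a)) ^ a with hP2
    have hP2val : ∀ x : Fin (b + c + a), (P2 x).val = (x.val + a) % (b + c + a) :=
      fun x => rot_val a x
    have hsP2 : ((Perm.sign P2 : ℤˣ) : ℤ) = (-1 : ℤ) ^ (a * (b + c)) := by
      rw [hP2, sign_rot a (by omega)]
      rw [show b + c + a - a = b + c by omega]
    have e1 : ∑ σ' : Perm (Fin (b + c + a)), g2 (σ' * P2)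
        = ∑ σ' : Perm (Fin (b + c + a)), g2 σ' := by
      have h := Equiv.sum_comp (Equiv.mulRight P2) g2
      simpa [Equiv.coe_mulRight] using h
    have e2 : ∑ σ : Perm (Fin (a + b + c)), g2 (c2.permCongr σ * P2)
        = ∑ σ' : Perm (Fin (b + c + a)), g2 (σ' * P2) :=
      Equiv.sum_comp c2.permCongr (fun σ' => g2 (σ' * P2))
    have step : tripleSum H G F w2 = ∑ σ : Perm (Fin (a + b + c)), g2 (c2.permCongr σ * P2) := by
      rw [show tripleSum H G F w2 = ∑ σ' : Perm (Fin (b + c + a)), g2 σ' from rfl, ← e1, ← e2]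
    rw [step]
    refine Finset.sum_congr rfl fun σ _ => ?_
    have hcol : ∀ y : Fin (a + b + c), w2 (c2 y) = v y := by
      intro y; rw [hw2]; apply congr_arg; apply Fin.ext; simp [hc2']
    have k1 : ∀ j : Fin b, c2.symm (P2 (Fin.castAdd a (Fin.castAdd c j)))
        = Fin.castAdd c (Fin.natAdd a j) := by
      intro j; apply Fin.ext
      have h2x := hP2val (Fin.castAdd a (Fin.castAdd c j))
      simp only [Fin.coe_castAdd, Fin.coe_natAdd] at h2x
      simp only [hc2', finCongr_symm, finCongr_apply, Fin.coe_cast, Fin.coe_castAdd,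
        Fin.coe_natAdd]
      rw [h2x, Nat.mod_eq_of_lt (by omega)]
      omega
    have k2 : ∀ k : Fin c, c2.symm (P2 (Fin.castAdd a (Fin.natAdd b k)))
        = Fin.natAdd (a + b) k := by
      intro k; apply Fin.ext
      have h2x := hP2val (Fin.castAdd a (Fin.natAdd b k))
      simp only [Fin.coe_castAdd, Fin.coe_natAdd] at h2x
      simp only [hc2', finCongr_symm, finCongr_apply, Fin.coe_cast, Fin.coe_castAdd,
        Fin.coe_natAdd]
      rw [h2x, Nat.mod_eq_of_lt (by omega)]
      omega
    have k3 : ∀ i : Fin a, c2.symm (P2 (Fin.natAdd (b + c) i))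
        = Fin.castAdd c (Fin.castAdd b i) := by
      intro i; apply Fin.ext
      have h2x := hP2val (Fin.natAdd (b + c) i)
      simp only [Fin.coe_castAdd, Fin.coe_natAdd] at h2x
      simp only [hc2', finCongr_symm, finCongr_apply, Fin.coe_cast, Fin.coe_castAdd,
        Fin.coe_natAdd]
      rw [h2x, show b + c + (i : ℕ) + a = (b + c + a) + (i : ℕ) by omega,
        Nat.add_mod_left, Nat.mod_eq_of_lt (by omega)]
    rw [hg2]
    simp only []
    have a1 : (fun j => w2 ((c2.permCongr σ * P2) (Fin.castAdd a (Fin.castAdd c j))))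
        = fun j => v (σ (Fin.castAdd c (Fin.natAdd a j))) := by
      funext j
      show w2 (c2 (σ (c2.symm (P2 (Fin.castAdd a (Fin.castAdd c j)))))) = _
      rw [k1 j, hcol]
    have a2 : (fun k => w2 ((c2.permCongr σ * P2) (Fin.castAdd a (Fin.natAdd b k))))
        = fun k => v (σ (Fin.natAdd (a + b) k)) := by
      funext k
      show w2 (c2 (σ (c2.symm (P2 (Fin.castAdd a (Fin.natAdd b k)))))) = _
      rw [k2 k, hcol]
    have a3 : (fun i => w2 ((c2.permCongr σ * P2) (Fin.natAdd (b + c) i)))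
        = fun i => v (σ (Fin.castAdd c (Fin.castAdd b i))) := by
      funext i
      show w2 (c2 (σ (c2.symm (P2 (Fin.natAdd (b + c) i))))) = _
      rw [k3 i, hcol]
    rw [a1, a2, a3, map_mul, sign_permCongr, Units.val_mul, hsP2, ← smul_smul]
  have T3 : tripleSum G F H (fun x => v (Fin.cast h₃ x))
      = ∑ σ : Perm (Fin (a + b + c)), ((Perm.sign σ : ℤˣ) : ℤ) •
          (((-1 : ℤ) ^ ((a + b) * c)) •
            ⁅⁅G fun k => v (σ (Fin.natAdd (a + b) k)),
               F fun i => v (σ (Fin.castAdd c (Fin.castAdd b i)))⁆,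
              H fun j => v (σ (Fin.castAdd c (Fin.natAdd a j)))⁆) := by
    set w3 : Fin (c + a + b) → V := fun x => v (Fin.cast h₃ x) with hw3
    set g3 : Perm (Fin (c + a + b)) → L := fun σ' => ((Perm.sign σ' : ℤˣ) : ℤ) •
      ⁅⁅G fun k => w3 (σ' (Fin.castAdd b (Fin.castAdd a k))),
         F fun i => w3 (σ' (Fin.castAdd b (Fin.natAdd c i)))⁆,
        H fun j => w3 (σ' (Fin.natAdd (c + a) j))⁆ with hg3
    set c3 : Fin (a + b + c) ≃ Fin (c + a + b) := finCongr h₃.symm with hc3'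
    set P3 : Perm (Fin (c + a + b)) := (finRotate (c + a + b)) ^ (a + b) with hP3
    have hP3val : ∀ x : Fin (c + a + b), (P3 x).val = (x.val + (a + b)) % (c + a + b) :=
      fun x => rot_val (a + b) x
    have hsP3 : ((Perm.sign P3 : ℤˣ) : ℤ) = (-1 : ℤ) ^ ((a + b) * c) := by
      rw [hP3, sign_rot (a + b) (by omega)]
      rw [show c + a + b - (a + b) = c by omega]
    have e1 : ∑ σ' : Perm (Fin (c + a + b)), g3 (σ' * P3)
        = ∑ σ' : Perm (Fin (c + a + b)), g3 σ' := by
      have h := Equiv.sum_comp (Equiv.mulRight P3) g3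
      simpa [Equiv.coe_mulRight] using h
    have e2 : ∑ σ : Perm (Fin (a + b + c)), g3 (c3.permCongr σ * P3)
        = ∑ σ' : Perm (Fin (c + a + b)), g3 (σ' * P3) :=
      Equiv.sum_comp c3.permCongr (fun σ' => g3 (σ' * P3))
    have step : tripleSum G F H w3 = ∑ σ : Perm (Fin (a + b + c)), g3 (c3.permCongr σ * P3) := by
      rw [show tripleSum G F H w3 = ∑ σ' : Perm (Fin (c + a + b)), g3 σ' from rfl, ← e1, ← e2]
    rw [step]
    refine Finset.sum_congr rfl fun σ _ => ?_
    have hcol : ∀ y : Fin (a + b + c), w3 (c3 y) = v y := by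
      intro y; rw [hw3]; apply congr_arg; apply Fin.ext; simp [hc3']
    have k1 : ∀ k : Fin c, c3.symm (P3 (Fin.castAdd b (Fin.castAdd a k)))
        = Fin.natAdd (a + b) k := by
      intro k; apply Fin.ext
      have h3x := hP3val (Fin.castAdd b (Fin.castAdd a k))
      simp only [Fin.coe_castAdd, Fin.coe_natAdd] at h3x
      simp only [hc3', finCongr_symm, finCongr_apply, Fin.coe_cast, Fin.coe_castAdd,
        Fin.coe_natAdd]
      rw [h3x, Nat.mod_eq_of_lt (by omega)]
      omega
    have k2 : ∀ i : Fin a, c3.symm (P3 (Fin.castAdd b (Fin.natAdd c i)))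
        = Fin.castAdd c (Fin.castAdd b i) := by
      intro i; apply Fin.ext
      have h3x := hP3val (Fin.castAdd b (Fin.natAdd c i))
      simp only [Fin.coe_castAdd, Fin.coe_natAdd] at h3x
      simp only [hc3', finCongr_symm, finCongr_apply, Fin.coe_cast, Fin.coe_castAdd,
        Fin.coe_natAdd]
      rw [h3x, show c + (i : ℕ) + (a + b) = (c + a + b) + (i : ℕ) by omega,
        Nat.add_mod_left, Nat.mod_eq_of_lt (by omega)]
    have k3 : ∀ j : Fin b, c3.symm (P3 (Fin.natAdd (c + a) j))
        = Fin.castAdd c (Fin.natAdd a j) := by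
      intro j; apply Fin.ext
      have h3x := hP3val (Fin.natAdd (c + a) j)
      simp only [Fin.coe_castAdd, Fin.coe_natAdd] at h3x
      simp only [hc3', finCongr_symm, finCongr_apply, Fin.coe_cast, Fin.coe_castAdd,
        Fin.coe_natAdd]
      rw [h3x, show c + a + (j : ℕ) + (a + b) = (c + a + b) + (a + (j : ℕ)) by omega,
        Nat.add_mod_left, Nat.mod_eq_of_lt (by omega)]
    rw [hg3]
    simp only []
    have a1 : (fun k => w3 ((c3.permCongr σ * P3) (Fin.castAdd b (Fin.castAdd a k))))
        = fun k => v (σ (Fin.natAdd (a + b) k)) := by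
      funext k
      show w3 (c3 (σ (c3.symm (P3 (Fin.castAdd b (Fin.castAdd a k)))))) = _
      rw [k1 k, hcol]
    have a2 : (fun i => w3 ((c3.permCongr σ * P3) (Fin.castAdd b (Fin.natAdd c i))))
        = fun i => v (σ (Fin.castAdd c (Fin.castAdd b i))) := by
      funext i
      show w3 (c3 (σ (c3.symm (P3 (Fin.castAdd b (Fin.natAdd c i)))))) = _
      rw [k2 i, hcol]
    have a3 : (fun j => w3 ((c3.permCongr σ * P3) (Fin.natAdd (c + a) j)))
        = fun j => v (σ (Fin.castAdd c (Fin.natAdd a j))) := by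
      funext j
      show w3 (c3 (σ (c3.symm (P3 (Fin.natAdd (c + a) j))))) = _
      rw [k3 j, hcol]
    rw [a1, a2, a3, map_mul, sign_permCongr, Units.val_mul, hsP3, ← smul_smul]
  rw [T2, T3]
  rw [show tripleSum F H G v = ∑ σ : Perm (Fin (a + b + c)), ((Perm.sign σ : ℤˣ) : ℤ) •
      ⁅⁅F fun i => v (σ (Fin.castAdd c (Fin.castAdd b i))),
         H fun j => v (σ (Fin.castAdd c (Fin.natAdd a j)))⁆,
        G fun k => v (σ (Fin.natAdd (a + b) k))⁆ from rfl]
  rw [Finset.smul_sum, Finset.smul_sum, Finset.smul_sum, ← Finset.sum_add_distrib,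
    ← Finset.sum_add_distrib]
  refine Finset.sum_eq_zero fun σ _ => ?_
  simp only [smul_smul]
  have hc2c : (-1 : ℤ) ^ (b * a) * (((Perm.sign σ : ℤˣ) : ℤ) * (-1 : ℤ) ^ (a * (b + c)))
      = (-1 : ℤ) ^ (a * c) * ((Perm.sign σ : ℤˣ) : ℤ) := by
    have h : (-1 : ℤ) ^ (b * a) * (-1 : ℤ) ^ (a * (b + c)) = (-1 : ℤ) ^ (a * c) := by
      rw [← pow_add, show b * a + a * (b + c) = a * c + 2 * (a * b) by ring,
        pow_add, pow_mul (-1 : ℤ) 2, neg_one_sq, one_pow, mul_one]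
    linear_combination ((Perm.sign σ : ℤˣ) : ℤ) * h
  have hc3c : (-1 : ℤ) ^ (c * b) * (((Perm.sign σ : ℤˣ) : ℤ) * (-1 : ℤ) ^ ((a + b) * c))
      = (-1 : ℤ) ^ (a * c) * ((Perm.sign σ : ℤˣ) : ℤ) := by
    have h : (-1 : ℤ) ^ (c * b) * (-1 : ℤ) ^ ((a + b) * c) = (-1 : ℤ) ^ (a * c) := by
      rw [← pow_add, show c * b + (a + b) * c = a * c + 2 * (b * c) by ring,
        pow_add, pow_mul (-1 : ℤ) 2, neg_one_sq, one_pow, mul_one]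
    linear_combination ((Perm.sign σ : ℤˣ) : ℤ) * h
  rw [hc2c, hc3c, ← smul_add, ← smul_add, jac3, smul_zero]

end CEProof

open CEProof in
/-- the Chevalley–Eilenberg convolution bracket of alternating
multilinear maps with values in a Lie algebra is again alternating multilinear,
and it satisfies graded antisymmetry and the graded Jacobi identity. -/
theorem ceBracket_graded_lie
    {K V L : Type*} [Field K] [CharZero K] [AddCommGroup V] [Module K V]
    [LieRing L] [LieAlgebra K L] {q₁ q₂ q₃ : ℕ}
    (F : AlternatingMap K V L (Fin q₁)) (H : AlternatingMap K V L (Fin q₂))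
    (G : AlternatingMap K V L (Fin q₃)) :
    (∃ B : AlternatingMap K V L (Fin (q₁ + q₂)), ⇑B = ceBracket ⇑F ⇑H) ∧
    castFn (Nat.add_comm q₂ q₁) (ceBracket ⇑H ⇑F) =
      -(((-1 : ℤ) ^ (q₁ * q₂)) • ceBracket ⇑F ⇑H) ∧
    ((-1 : ℤ) ^ (q₁ * q₃)) • ceBracket (ceBracket ⇑F ⇑H) ⇑G +
      ((-1 : ℤ) ^ (q₂ * q₁)) • castFn (by omega) (ceBracket (ceBracket ⇑H ⇑G) ⇑F) +
      ((-1 : ℤ) ^ (q₃ * q₂)) • castFn (by omega) (ceBracket (ceBracket ⇑G ⇑F) ⇑H) = 0 := by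
  refine ⟨exists_alt F H, ?_, ?_⟩
  · funext v
    apply zsmul_cancel (K := K) (m := ((q₁.factorial * q₂.factorial : ℕ) : ℤ))
      (by exact_mod_cast Nat.mul_ne_zero q₁.factorial_ne_zero q₂.factorial_ne_zero)
    have hL : ((q₁.factorial * q₂.factorial : ℕ) : ℤ) •
        (castFn (Nat.add_comm q₂ q₁) (ceBracket ⇑H ⇑F) v)
        = fullSum ⇑H ⇑F (fun i => v (Fin.cast (Nat.add_comm q₂ q₁) i)) := by
      rw [show castFn (Nat.add_comm q₂ q₁) (ceBracket ⇑H ⇑F) v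
          = ceBracket ⇑H ⇑F (fun i => v (Fin.cast (Nat.add_comm q₂ q₁) i)) from rfl]
      rw [show (q₁.factorial * q₂.factorial : ℕ) = (q₂.factorial * q₁.factorial : ℕ) by ring]
      exact (fullSum_eq H F _).symm
    rw [hL]
    rw [show (-(((-1 : ℤ) ^ (q₁ * q₂)) • ceBracket ⇑F ⇑H)) v
        = -(((-1 : ℤ) ^ (q₁ * q₂)) • ceBracket ⇑F ⇑H v) from rfl]
    rw [smul_neg, smul_comm ((q₁.factorial * q₂.factorial : ℕ) : ℤ) ((-1 : ℤ) ^ (q₁ * q₂)),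
      ← fullSum_eq F H v]
    exact fullSum_swap ⇑F ⇑H v
  · have h₂L : q₂ + q₃ + q₁ = q₁ + q₂ + q₃ := by omega
    have h₃L : q₃ + q₁ + q₂ = q₁ + q₂ + q₃ := by omega
    funext v
    simp only [Pi.add_apply, Pi.smul_apply, Pi.zero_apply]
    rw [show castFn (by omega) (ceBracket (ceBracket ⇑H ⇑G) ⇑F) v
        = ceBracket (ceBracket ⇑H ⇑G) ⇑F (fun x => v (Fin.cast h₂L x)) from rfl]
    rw [show castFn (by omega) (ceBracket (ceBracket ⇑G ⇑F) ⇑H) v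
        = ceBracket (ceBracket ⇑G ⇑F) ⇑H (fun x => v (Fin.cast h₃L x)) from rfl]
    apply zsmul_cancel (K := K)
      (m := ((q₁.factorial * q₂.factorial * q₃.factorial : ℕ) : ℤ))
      (by
        have hne : (q₁.factorial * q₂.factorial * q₃.factorial : ℕ) ≠ 0 :=
          Nat.mul_ne_zero (Nat.mul_ne_zero q₁.factorial_ne_zero q₂.factorial_ne_zero)
            q₃.factorial_ne_zero
        exact_mod_cast hne)
    have E1 : ((q₁.factorial * q₂.factorial * q₃.factorial : ℕ) : ℤ) •
        ceBracket (ceBracket ⇑F ⇑H) ⇑G v = tripleSum ⇑F ⇑H ⇑G v := (triple_eq F H G v).symm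
    have E2 : ((q₁.factorial * q₂.factorial * q₃.factorial : ℕ) : ℤ) •
        ceBracket (ceBracket ⇑H ⇑G) ⇑F (fun x => v (Fin.cast h₂L x))
        = tripleSum ⇑H ⇑G ⇑F (fun x => v (Fin.cast h₂L x)) := by
      rw [show (q₁.factorial * q₂.factorial * q₃.factorial : ℕ)
          = q₂.factorial * q₃.factorial * q₁.factorial by ring]
      exact (triple_eq H G F _).symm
    have E3 : ((q₁.factorial * q₂.factorial * q₃.factorial : ℕ) : ℤ) •
        ceBracket (ceBracket ⇑G ⇑F) ⇑H (fun x => v (Fin.cast h₃L x))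
        = tripleSum ⇑G ⇑F ⇑H (fun x => v (Fin.cast h₃L x)) := by
      rw [show (q₁.factorial * q₂.factorial * q₃.factorial : ℕ)
          = q₃.factorial * q₁.factorial * q₂.factorial by ring]
      exact (triple_eq G F H _).symm
    rw [smul_zero, smul_add, smul_add,
      smul_comm ((q₁.factorial * q₂.factorial * q₃.factorial : ℕ) : ℤ) ((-1 : ℤ) ^ (q₁ * q₃)),
      smul_comm ((q₁.factorial * q₂.factorial * q₃.factorial : ℕ) : ℤ) ((-1 : ℤ) ^ (q₂ * q₁)),
      smul_comm ((q₁.factorial * q₂.factorial * q₃.factorial : ℕ) : ℤ) ((-1 : ℤ) ^ (q₃ * q₂)),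
      E1, E2, E3]
    exact triple_cyclic ⇑F ⇑H ⇑G v h₂L h₃L
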